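/- arXiv:2107.13146 — 7 statements merged into one kernel-verified Lean document; each statement's English description precedes it below -/
import Mathlib

section
/- If w = (w_0,…,w_n) is P-feasible and there exists an index î ∈ {1,…,n} with w_{î−1} > max(q_î w_î + p_î R_î, w_î), then there exists a P-feasible vector w' = (w'_0,…,w'_n) with w'_0 < w_0. Consequently, every optimal solution of the linear program P satisfies w_{i−1} = max(q_i w_i + p_i R_i, w_i) for every i ∈ {1,…,n}. -/
/-!
Write `T_i x = max (q_i x + p_i R_i) x` (this is `dpStep p R i x`), so that `w` is feasible
iff `w n = 0` and `T_i (w i) ≤ w (i - 1)` for all `i`. Since `q_i > 0`, each `T_i` is strictly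
increasing. If the constraint at `i` is slack, lowering `w (i - 1)` to `T_i (w i)` keeps `w`
feasible and makes the constraint at `i - 1` slack. Repeating this down to `i = 1` lowers `w 0`.
-/

/-- `w = (w 0, …, w n)` is feasible for linear program P. -/
def PFeasible (n : ℕ) (p R w : ℕ → ℝ) : Prop :=
  w n = 0 ∧ ∀ i, 1 ≤ i → i ≤ n →
    (1 - p i) * w i + p i * R i ≤ w (i - 1) ∧ w i ≤ w (i - 1)

def dpStep (p R : ℕ → ℝ) (i : ℕ) (x : ℝ) : ℝ :=
  max ((1 - p i) * x + p i * R i) x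

section

variable {n : ℕ} {p R : ℕ → ℝ}

theorem pFeasible_iff {w : ℕ → ℝ} :
    PFeasible n p R w ↔ w n = 0 ∧ ∀ i, 1 ≤ i → i ≤ n → dpStep p R i (w i) ≤ w (i - 1) := by
  simp only [PFeasible, dpStep, max_le_iff]

theorem dpStep_strictMono {i : ℕ} (hp : p i < 1) : StrictMono (dpStep p R i) := by
  intro x y hxy
  have hq : 0 < 1 - p i := sub_pos.mpr hp
  exact max_lt_max (by nlinarith) hxy

theorem PFeasible.update_dpStep {w : ℕ → ℝ} (hp : ∀ i, 1 ≤ i → i ≤ n → p i < 1)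
    (hw : PFeasible n p R w) {k : ℕ} (hk : k + 1 ≤ n) :
    PFeasible n p R (Function.update w k (dpStep p R (k + 1) (w (k + 1)))) := by
  rw [pFeasible_iff] at hw ⊢
  obtain ⟨hwn, hw⟩ := hw
  have hlow : dpStep p R (k + 1) (w (k + 1)) ≤ w k := hw (k + 1) le_add_self hk
  refine ⟨by rwa [Function.update_of_ne (by omega)], fun i hi hin => ?_⟩
  simp only [Function.update_apply]
  split_ifs with hik
  · omega
  · subst hik
    exact ((dpStep_strictMono (hp i hi hin)).monotone hlow).trans (hw i hi hin)
  · obtain rfl : i = k + 1 := by omega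
    exact le_rfl
  · exact hw i hi hin

theorem PFeasible.exists_lt_of_dpStep_lt {w : ℕ → ℝ} (hp : ∀ i, 1 ≤ i → i ≤ n → p i < 1)
    (hw : PFeasible n p R w) {k : ℕ} (hk : k + 1 ≤ n)
    (hlt : dpStep p R (k + 1) (w (k + 1)) < w k) : ∃ w', PFeasible n p R w' ∧ w' 0 < w 0 := by
  induction k generalizing w with
  | zero => exact ⟨_, hw.update_dpStep hp hk, by rwa [Function.update_self]⟩
  | succ k ih =>
    set w' := Function.update w (k + 1) (dpStep p R (k + 2) (w (k + 2))) with hw'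
    have hslack : dpStep p R (k + 1) (w' (k + 1)) < w' k := by
      rw [hw', Function.update_self, Function.update_of_ne (by omega)]
      exact (dpStep_strictMono (hp (k + 1) le_add_self (by omega)) hlt).trans_le
        ((pFeasible_iff.mp hw).2 (k + 1) le_add_self (by omega))
    obtain ⟨v, hv, hv0⟩ := ih (hw.update_dpStep hp hk) (by omega) hslack
    exact ⟨v, hv, hv0.trans_eq (Function.update_of_ne (by omega) _ _)⟩

end

theorem strict_feasible_not_optimal_and_optimal_solves_dp_general (n : ℕ)
    (p R : ℕ → ℝ) (hp : ∀ i, 1 ≤ i → i ≤ n → 0 < p i ∧ p i < 1) :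
    (∀ w : ℕ → ℝ, PFeasible n p R w →
      (∃ i, 1 ≤ i ∧ i ≤ n ∧ max ((1 - p i) * w i + p i * R i) (w i) < w (i - 1)) →
      ∃ w' : ℕ → ℝ, PFeasible n p R w' ∧ w' 0 < w 0) ∧
    (∀ w : ℕ → ℝ, PFeasible n p R w →
      (∀ w' : ℕ → ℝ, PFeasible n p R w' → w 0 ≤ w' 0) →
      ∀ i, 1 ≤ i → i ≤ n → w (i - 1) = max ((1 - p i) * w i + p i * R i) (w i)) := by
  have hp' : ∀ i, 1 ≤ i → i ≤ n → p i < 1 := fun i hi hin => (hp i hi hin).2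
  have improve : ∀ w : ℕ → ℝ, PFeasible n p R w →
      (∃ i, 1 ≤ i ∧ i ≤ n ∧ dpStep p R i (w i) < w (i - 1)) →
      ∃ w' : ℕ → ℝ, PFeasible n p R w' ∧ w' 0 < w 0 := by
    rintro w hw ⟨_ | k, hi, hin, hlt⟩
    · omega
    · exact hw.exists_lt_of_dpStep_lt hp' hin hlt
  refine ⟨improve, fun w hw hopt i hi hin => ?_⟩
  refine le_antisymm (not_lt.mp fun hlt => ?_) ((pFeasible_iff.mp hw).2 i hi hin)
  obtain ⟨w', hw', hw'0⟩ := improve w hw ⟨i, hi, hin, hlt⟩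
  exact (hopt w' hw').not_gt hw'0

/-- A P-feasible point where some DP inequality is strict is not optimal;
consequently every optimal solution of P satisfies the DP equation. -/
theorem strict_feasible_not_optimal_and_optimal_solves_dp (n : ℕ) (hn : 1 ≤ n)
    (p R : ℕ → ℝ) (hp : ∀ i, 1 ≤ i → i ≤ n → 0 < p i ∧ p i < 1) :
    (∀ w : ℕ → ℝ, PFeasible n p R w →
      (∃ i, 1 ≤ i ∧ i ≤ n ∧ max ((1 - p i) * w i + p i * R i) (w i) < w (i - 1)) →
      ∃ w' : ℕ → ℝ, PFeasible n p R w' ∧ w' 0 < w 0) ∧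
    (∀ w : ℕ → ℝ, PFeasible n p R w →
      (∀ w' : ℕ → ℝ, PFeasible n p R w' → w 0 ≤ w' 0) →
      ∀ i, 1 ≤ i → i ≤ n → w (i - 1) = max ((1 - p i) * w i + p i * R i) (w i)) :=
  strict_feasible_not_optimal_and_optimal_solves_dp_general n p R hp
end

section
/- For an n-dimensional real vector y = (y_1,…,y_n), the following two conditions are equivalent: (c1) there exists π = (π_1,…,π_n) ∈ [0,1]^n such that (y, π) is Q-feasible; (c2) there exists z = (z_0,…,z_n) ∈ ℝ^{n+1} such that (y, z) is FF-feasible. -/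
/-- The policy `pol = (pol 1, …, pol n)` lies in the unit box `[0,1]^n`. -/
def UnitBox (n : ℕ) (pol : ℕ → ℝ) : Prop :=
  ∀ i, 1 ≤ i → i ≤ n → 0 ≤ pol i ∧ pol i ≤ 1

/-- `(y, pol)` is feasible for the non-linear program Q. -/
def QFeasible (n : ℕ) (p y pol : ℕ → ℝ) : Prop :=
  ∀ i, 1 ≤ i → i ≤ n →
    y i = (∏ j ∈ Finset.Icc 1 (i - 1), ((1 - p j) + p j * pol j)) * (p i * (1 - pol i))

/-- `(y, z)` is feasible for the flow formulation FF. -/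
def FFFeasible (n : ℕ) (p y z : ℕ → ℝ) : Prop :=
  z 0 = 1 ∧ ∀ i, 1 ≤ i → i ≤ n →
    0 ≤ y i ∧ y i ≤ p i * z (i - 1) ∧ y i + z i = z (i - 1)

/-!
An FF-feasible flow `z` is exactly the vector of survival probabilities
`z i = ∏_{j ≤ i} (q_j + p_j π_j)` of a policy `π`: given `π`, the survival probabilities form a
flow, and given a flow, the policy with `1 - π_i = y_i / (p_i z_{i-1}) ∈ [0, 1]` reproduces it,
because then `z_{i-1} (q_i + p_i π_i) = z_{i-1} - y_i = z_i`.
-/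

def survivalProb (p pol : ℕ → ℝ) (i : ℕ) : ℝ :=
  ∏ j ∈ Finset.Icc 1 i, ((1 - p j) + p j * pol j)

namespace survivalProb

variable {p pol : ℕ → ℝ}

@[simp]
theorem zero : survivalProb p pol 0 = 1 := by
  simp [survivalProb]

theorem succ (k : ℕ) :
    survivalProb p pol (k + 1) =
      survivalProb p pol k * ((1 - p (k + 1)) + p (k + 1) * pol (k + 1)) :=
  Finset.prod_Icc_succ_top (Nat.le_add_left 1 k) _

theorem nonneg {n : ℕ} (hp : ∀ i, 1 ≤ i → i ≤ n → p i ≤ 1) (hpol : UnitBox n pol) :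
    ∀ i ≤ n, 0 ≤ survivalProb p pol i := by
  intro i hi
  refine Finset.prod_nonneg fun j hj => ?_
  obtain ⟨hj1, hji⟩ := Finset.mem_Icc.mp hj
  have hpj := hp j hj1 (hji.trans hi)
  obtain ⟨hpol0, hpol1⟩ := hpol j hj1 (hji.trans hi)
  rcases le_total 0 (p j) with hpj0 | hpj0 <;> nlinarith

end survivalProb

theorem QFeasible.ffFeasible_survivalProb {n : ℕ} {p y pol : ℕ → ℝ}
    (hp : ∀ i, 1 ≤ i → i ≤ n → 0 ≤ p i ∧ p i ≤ 1) (hpol : UnitBox n pol)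
    (hQ : QFeasible n p y pol) : FFFeasible n p y (survivalProb p pol) := by
  refine ⟨survivalProb.zero, fun i hi1 hin => ?_⟩
  obtain ⟨k, rfl⟩ := Nat.exists_eq_add_of_le' hi1
  have hS := survivalProb.nonneg (fun i h1 h2 => (hp i h1 h2).2) hpol k (by omega)
  obtain ⟨hp0, -⟩ := hp (k + 1) hi1 hin
  obtain ⟨hpol0, hpol1⟩ := hpol (k + 1) hi1 hin
  have hy : y (k + 1) = survivalProb p pol k * (p (k + 1) * (1 - pol (k + 1))) :=
    hQ (k + 1) hi1 hin
  simp only [Nat.add_sub_cancel, hy, survivalProb.succ]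
  refine ⟨by positivity, ?_, by ring⟩
  nlinarith [mul_nonneg (mul_nonneg hS hp0) hpol0]

/-- When `p i * z (i - 1) = 0` the division returns `0`; FF-feasibility then forces `y i = 0`,
so any value would do. -/
noncomputable def FFFeasible.policy (p y z : ℕ → ℝ) (i : ℕ) : ℝ :=
  1 - y i / (p i * z (i - 1))

section FFFeasible

variable {n : ℕ} {p y z : ℕ → ℝ}

theorem FFFeasible.policy_mem_unitBox (h : FFFeasible n p y z) :
    UnitBox n (FFFeasible.policy p y z) := by
  intro i hi1 hin
  obtain ⟨hy0, hyz, -⟩ := h.2 i hi1 hin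
  have h0 : 0 ≤ y i / (p i * z (i - 1)) := div_nonneg hy0 (hy0.trans hyz)
  have h1 : y i / (p i * z (i - 1)) ≤ 1 := div_le_one_of_le₀ hyz (hy0.trans hyz)
  constructor <;> simp only [FFFeasible.policy] <;> linarith

theorem FFFeasible.exit_eq (h : FFFeasible n p y z) {i : ℕ} (hi1 : 1 ≤ i) (hin : i ≤ n) :
    z (i - 1) * (p i * (1 - FFFeasible.policy p y z i)) = y i := by
  obtain ⟨hy0, hyz, -⟩ := h.2 i hi1 hin
  have hcancel : p i * z (i - 1) * (y i / (p i * z (i - 1))) = y i :=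
    mul_div_cancel_of_imp' fun h0 => le_antisymm (h0 ▸ hyz) hy0
  simp only [FFFeasible.policy]
  linear_combination hcancel

theorem FFFeasible.survivalProb_policy (h : FFFeasible n p y z) :
    ∀ i ≤ n, survivalProb p (FFFeasible.policy p y z) i = z i := by
  intro i hin
  induction i with
  | zero => rw [survivalProb.zero, h.1]
  | succ k ih =>
    have hexit := h.exit_eq (Nat.le_add_left 1 k) hin
    have hflow := (h.2 (k + 1) (Nat.le_add_left 1 k) hin).2.2
    simp only [Nat.add_sub_cancel] at hexit hflow
    rw [survivalProb.succ, ih (by omega)]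
    linear_combination -hflow - hexit

theorem FFFeasible.qFeasible_policy (h : FFFeasible n p y z) :
    QFeasible n p y (FFFeasible.policy p y z) := by
  intro i hi1 hin
  change y i = survivalProb p _ (i - 1) * _
  rw [h.survivalProb_policy (i - 1) (by omega), h.exit_eq hi1 hin]

end FFFeasible

theorem Q_feasible_iff_FF_feasible_general (n : ℕ) (p : ℕ → ℝ)
    (hp : ∀ i, 1 ≤ i → i ≤ n → 0 < p i ∧ p i < 1) (y : ℕ → ℝ) :
    (∃ pol : ℕ → ℝ, UnitBox n pol ∧ QFeasible n p y pol) ↔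
    (∃ z : ℕ → ℝ, FFFeasible n p y z) := by
  constructor
  · rintro ⟨pol, hpol, hQ⟩
    exact ⟨survivalProb p pol,
      hQ.ffFeasible_survivalProb (fun i h1 h2 => ⟨(hp i h1 h2).1.le, (hp i h1 h2).2.le⟩) hpol⟩
  · rintro ⟨z, hFF⟩
    exact ⟨FFFeasible.policy p y z, hFF.policy_mem_unitBox, hFF.qFeasible_policy⟩

/-- Theorem 2: (c1) and (c2) are equivalent. -/
theorem Q_feasible_iff_FF_feasible (n : ℕ) (hn : 1 ≤ n) (p : ℕ → ℝ)
    (hp : ∀ i, 1 ≤ i → i ≤ n → 0 < p i ∧ p i < 1) (y : ℕ → ℝ) :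
    (∃ pol : ℕ → ℝ, UnitBox n pol ∧ QFeasible n p y pol) ↔
    (∃ z : ℕ → ℝ, FFFeasible n p y z) :=
  Q_feasible_iff_FF_feasible_general n p hp y
end

section
/- If (y, π) is Q-feasible, then the vector z defined by z_0 = 1 and z_i = ∏_{j=1}^{i} (q_j + p_j π_j) for i ∈ {1,…,n} makes (y, z) FF-feasible; that is, for every i ∈ {1,…,n} one has z_{i−1} − z_i = y_i, y_i ≥ 0, and p_i z_{i−1} − y_i ≥ 0. -/
/-! The mass `Z` reaching a stage with parameters `p, π` splits into the part `Z·p(1 − π)` that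
leaves there and the part `Z·(q + pπ)` that moves on; `y` and `z` are these two parts. -/

/-- The paper's `z_k`. -/
noncomputable def survival (p pol : ℕ → ℝ) (k : ℕ) : ℝ :=
  ∏ j ∈ Finset.Icc 1 k, ((1 - p j) + p j * pol j)

namespace survival

variable (p pol : ℕ → ℝ)

@[simp]
theorem zero : survival p pol 0 = 1 := by
  simp [survival]

theorem succ (k : ℕ) :
    survival p pol (k + 1) = survival p pol k * ((1 - p (k + 1)) + p (k + 1) * pol (k + 1)) :=
  Finset.prod_Icc_succ_top (by omega) _

variable {p pol} in
theorem nonneg {k : ℕ} (h : ∀ j ∈ Finset.Icc 1 k, 0 ≤ p j ∧ p j ≤ 1 ∧ 0 ≤ pol j) :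
    0 ≤ survival p pol k :=
  Finset.prod_nonneg fun j hj => by
    obtain ⟨hp0, hp1, hpol0⟩ := h j hj
    nlinarith

end survival

theorem flow_step {Z p π : ℝ} (hZ : 0 ≤ Z) (hp : 0 ≤ p) (hπ0 : 0 ≤ π) (hπ1 : π ≤ 1) :
    Z - Z * ((1 - p) + p * π) = Z * (p * (1 - π)) ∧
      0 ≤ Z * (p * (1 - π)) ∧ 0 ≤ p * Z - Z * (p * (1 - π)) := by
  refine ⟨by ring, by have := sub_nonneg.2 hπ1; positivity, ?_⟩
  calc (0 : ℝ) ≤ Z * (p * π) := by positivity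
    _ = p * Z - Z * (p * (1 - π)) := by ring

theorem Q_feasible_to_FF_feasible_general (n : ℕ) (p : ℕ → ℝ)
    (hp : ∀ i, 1 ≤ i → i ≤ n → 0 < p i ∧ p i < 1)
    (y pol z : ℕ → ℝ) (hpol : UnitBox n pol) (hQ : QFeasible n p y pol)
    (hz0 : z 0 = 1)
    (hz : ∀ i, 1 ≤ i → i ≤ n → z i = ∏ j ∈ Finset.Icc 1 i, ((1 - p j) + p j * pol j)) :
    FFFeasible n p y z ∧
    ∀ i, 1 ≤ i → i ≤ n →
      z (i - 1) - z i = y i ∧ 0 ≤ y i ∧ 0 ≤ p i * z (i - 1) - y i := by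
  have hz_survival : ∀ k ≤ n, z k = survival p pol k
    | 0, _ => by rw [hz0, survival.zero]
    | k + 1, hk => hz (k + 1) (by omega) hk
  have hsurvival_nonneg : ∀ k ≤ n, 0 ≤ survival p pol k := fun k hk =>
    survival.nonneg fun j hj => by
      obtain ⟨hj1, hjk⟩ := Finset.mem_Icc.1 hj
      exact ⟨(hp j hj1 (by omega)).1.le, (hp j hj1 (by omega)).2.le, (hpol j hj1 (by omega)).1⟩
  have key : ∀ i, 1 ≤ i → i ≤ n →
      z (i - 1) - z i = y i ∧ 0 ≤ y i ∧ 0 ≤ p i * z (i - 1) - y i := by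
    rintro (_ | k) hk1 hkn
    · omega
    have hy : y (k + 1) = survival p pol k * (p (k + 1) * (1 - pol (k + 1))) := hQ (k + 1) hk1 hkn
    rw [Nat.add_sub_cancel, hz_survival k (by omega), hz_survival (k + 1) hkn, survival.succ, hy]
    exact flow_step (hsurvival_nonneg k (by omega)) (hp _ hk1 hkn).1.le
      (hpol _ hk1 hkn).1 (hpol _ hk1 hkn).2
  refine ⟨⟨hz0, fun i hi1 hin => ?_⟩, key⟩
  obtain ⟨hflow, hy0, hcap⟩ := key i hi1 hin
  exact ⟨hy0, by linarith, by linarith⟩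

/-- (c1) → (c2): the partial products of q_j + p_j·pol_j give an FF-feasible z. -/
theorem Q_feasible_to_FF_feasible (n : ℕ) (hn : 1 ≤ n) (p : ℕ → ℝ)
    (hp : ∀ i, 1 ≤ i → i ≤ n → 0 < p i ∧ p i < 1)
    (y pol z : ℕ → ℝ) (hpol : UnitBox n pol) (hQ : QFeasible n p y pol)
    (hz0 : z 0 = 1)
    (hz : ∀ i, 1 ≤ i → i ≤ n → z i = ∏ j ∈ Finset.Icc 1 i, ((1 - p j) + p j * pol j)) :
    FFFeasible n p y z ∧
    ∀ i, 1 ≤ i → i ≤ n →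
      z (i - 1) - z i = y i ∧ 0 ≤ y i ∧ 0 ≤ p i * z (i - 1) - y i :=
  Q_feasible_to_FF_feasible_general n p hp y pol z hpol hQ hz0 hz
end

section
/- If (y, z) is FF-feasible, then there exists π = (π_1,…,π_n) with 0 ≤ π_i ≤ 1 for all i such that (y, π) is Q-feasible; moreover one may take π_i = 1 − y_i/(p_i z_{i−1}) for every i ∈ {1,…,n}. -/
/-!
Read `z i` as the probability of surviving the first `i` stages and `y i` as the probability of
stopping at stage `i`. The policy `π i = 1 - y i / (p i * z (i - 1))` makes the survival factor of
stage `i` equal to `1 - y i / z (i - 1) = z i / z (i - 1)`, so the products in Q telescope to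
`z (i - 1)`, and multiplying by `p i * (1 - π i) = y i / z (i - 1)` returns `y i`. The constraint
`y i ≤ p i * z (i - 1)` is what puts `π i` in `[0, 1]`, and together with `p i < 1` it keeps
every `z i` positive.
-/

open Finset

theorem mul_prod_Icc_div_pred {K : Type*} [Field K] {f : ℕ → K} {m : ℕ}
    (hf : ∀ k < m, f k ≠ 0) : f 0 * ∏ j ∈ Icc 1 m, f j / f (j - 1) = f m := by
  induction m with
  | zero => simp
  | succ m ih =>
    rw [prod_Icc_succ_top (Nat.le_add_left 1 m), ← mul_assoc,
      ih fun k hk ↦ hf k (hk.trans m.lt_succ_self), Nat.add_sub_cancel,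
      mul_div_cancel₀ _ (hf m m.lt_succ_self)]

theorem one_sub_add_mul_one_sub_div {K : Type*} [Field K] {p : K} (hp : p ≠ 0) (y z : K) :
    (1 - p) + p * (1 - y / (p * z)) = 1 - y / z := by
  rw [mul_sub, mul_one, mul_comm p z, ← div_div, mul_div_cancel₀ _ hp]
  ring

noncomputable def flowPolicy (p y z : ℕ → ℝ) (i : ℕ) : ℝ := 1 - y i / (p i * z (i - 1))

section FlowToPolicy

variable {n : ℕ} {p y z : ℕ → ℝ}

theorem FFFeasible.pos (hFF : FFFeasible n p y z) (hp : ∀ i, 1 ≤ i → i ≤ n → p i < 1) :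
    ∀ k ≤ n, 0 < z k := by
  intro k
  induction k with
  | zero => intro _; rw [hFF.1]; exact one_pos
  | succ k ih =>
    intro hk
    obtain ⟨-, hyle, hflow⟩ := hFF.2 (k + 1) (Nat.le_add_left 1 k) hk
    simp only [Nat.add_sub_cancel] at hyle hflow
    have := mul_pos (sub_pos.2 (hp (k + 1) (Nat.le_add_left 1 k) hk)) (ih (k.le_succ.trans hk))
    linarith

theorem FFFeasible.mul_pos_pred (hFF : FFFeasible n p y z)
    (hp : ∀ i, 1 ≤ i → i ≤ n → 0 < p i ∧ p i < 1)
    {i : ℕ} (hi₁ : 1 ≤ i) (hi : i ≤ n) :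
    0 < p i * z (i - 1) :=
  mul_pos (hp i hi₁ hi).1 (hFF.pos (fun j hj₁ hj ↦ (hp j hj₁ hj).2) _ (by omega))

theorem FFFeasible.flowPolicy_mem_Icc (hFF : FFFeasible n p y z)
    (hp : ∀ i, 1 ≤ i → i ≤ n → 0 < p i ∧ p i < 1)
    {i : ℕ} (hi₁ : 1 ≤ i) (hi : i ≤ n) :
    flowPolicy p y z i ∈ Set.Icc 0 1 := by
  obtain ⟨hy₀, hyle, -⟩ := hFF.2 i hi₁ hi
  have hpz := hFF.mul_pos_pred hp hi₁ hi
  have hratio : y i / (p i * z (i - 1)) ∈ Set.Icc 0 1 :=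
    ⟨div_nonneg hy₀ hpz.le, (div_le_one hpz).2 hyle⟩
  unfold flowPolicy
  constructor <;> linarith [hratio.1, hratio.2]

theorem FFFeasible.prod_survival_eq (hFF : FFFeasible n p y z)
    (hp : ∀ i, 1 ≤ i → i ≤ n → 0 < p i ∧ p i < 1) {m : ℕ} (hm : m ≤ n) :
    ∏ j ∈ Icc 1 m, ((1 - p j) + p j * flowPolicy p y z j) = z m := by
  have hz := hFF.pos fun j hj₁ hj ↦ (hp j hj₁ hj).2
  have hfactor : ∀ j ∈ Icc 1 m, (1 - p j) + p j * flowPolicy p y z j = z j / z (j - 1) := by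
    intro j hj
    obtain ⟨hj₁, hjm⟩ := mem_Icc.1 hj
    have hflow := (hFF.2 j hj₁ (hjm.trans hm)).2.2
    rw [flowPolicy, one_sub_add_mul_one_sub_div (hp j hj₁ (hjm.trans hm)).1.ne',
      eq_div_iff (hz _ (by omega)).ne', sub_mul, div_mul_cancel₀ _ (hz _ (by omega)).ne']
    linarith
  rw [prod_congr rfl hfactor, ← one_mul (∏ j ∈ Icc 1 m, _), ← hFF.1,
    mul_prod_Icc_div_pred fun k hk ↦ (hz k (by omega)).ne']

end FlowToPolicy

theorem FF_feasible_to_Q_feasible_general (n : ℕ) (p : ℕ → ℝ)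
    (hp : ∀ i, 1 ≤ i → i ≤ n → 0 < p i ∧ p i < 1)
    (y z : ℕ → ℝ) (hFF : FFFeasible n p y z) :
    ∃ pol : ℕ → ℝ,
      (∀ i, 1 ≤ i → i ≤ n → pol i = 1 - y i / (p i * z (i - 1))) ∧
      UnitBox n pol ∧ QFeasible n p y pol := by
  refine ⟨flowPolicy p y z, fun _ _ _ ↦ rfl,
    fun i hi₁ hi ↦ hFF.flowPolicy_mem_Icc hp hi₁ hi, fun i hi₁ hi ↦ ?_⟩
  rw [hFF.prod_survival_eq hp (by omega), flowPolicy, sub_sub_cancel, ← mul_assoc,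
    mul_comm (z _), mul_div_cancel₀ _ (hFF.mul_pos_pred hp hi₁ hi).ne']

/-- (c2) → (c1): from an FF-feasible pair one recovers a feasible policy,
given by pol_i = 1 - y_i/(p_i z_{i-1}). -/
theorem FF_feasible_to_Q_feasible (n : ℕ) (hn : 1 ≤ n) (p : ℕ → ℝ)
    (hp : ∀ i, 1 ≤ i → i ≤ n → 0 < p i ∧ p i < 1)
    (y z : ℕ → ℝ) (hFF : FFFeasible n p y z) :
    ∃ pol : ℕ → ℝ,
      (∀ i, 1 ≤ i → i ≤ n → pol i = 1 - y i / (p i * z (i - 1))) ∧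
      UnitBox n pol ∧ QFeasible n p y pol :=
  FF_feasible_to_Q_feasible_general n p hp y z hFF
end

section
/- The set of attainable objective values coincides for problems Q and FF: { ∑_{i=1}^n R_i y_i : (y, π) is Q-feasible for some π ∈ [0,1]^n } = { ∑_{i=1}^n R_i y_i : (y, z) is FF-feasible for some z ∈ ℝ^{n+1} }. In particular the two optimization problems have the same optimal value. -/
/-!
Read `π_i` as the probability of passing stage `i` once it is hit (probability `p_i`).
Then `Z_i = ∏_{j ≤ i} (q_j + p_j π_j)` is the probability of getting past stage `i`, and
`y_i = Z_{i-1} p_i (1 - π_i)`, so a Q-feasible pair is an FF-feasible flow with `z = Z`.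
Conversely, as `p_i < 1`, the flow `z` of an FF-feasible pair stays positive, so
`π_i = 1 - y_i / (p_i z_{i-1})` is a policy in `[0,1]^n` whose products `Z` are exactly `z`,
and it reproduces `y`.
-/

open Finset

def passProb (p pol : ℕ → ℝ) (i : ℕ) : ℝ :=
  ∏ j ∈ Icc 1 i, ((1 - p j) + p j * pol j)

@[simp]
lemma passProb_zero (p pol : ℕ → ℝ) : passProb p pol 0 = 1 := by
  simp [passProb]

lemma passProb_succ (p pol : ℕ → ℝ) (k : ℕ) :
    passProb p pol (k + 1) = passProb p pol k * ((1 - p (k + 1)) + p (k + 1) * pol (k + 1)) :=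
  prod_Icc_succ_top (Nat.le_add_left 1 k) _

lemma forall_Icc_one_iff_succ {n : ℕ} {P : ℕ → Prop} :
    (∀ i, 1 ≤ i → i ≤ n → P i) ↔ ∀ k < n, P (k + 1) :=
  ⟨fun h k hk => h (k + 1) (by omega) hk,
    fun h i hi hin => by obtain ⟨k, rfl⟩ := Nat.exists_eq_add_of_le' hi; exact h k hin⟩

lemma unitBox_iff_succ {n : ℕ} {pol : ℕ → ℝ} :
    UnitBox n pol ↔ ∀ k < n, 0 ≤ pol (k + 1) ∧ pol (k + 1) ≤ 1 :=
  forall_Icc_one_iff_succ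

lemma qFeasible_iff_succ {n : ℕ} {p y pol : ℕ → ℝ} :
    QFeasible n p y pol ↔
      ∀ k < n, y (k + 1) = passProb p pol k * (p (k + 1) * (1 - pol (k + 1))) :=
  forall_Icc_one_iff_succ

lemma ffFeasible_iff_succ {n : ℕ} {p y z : ℕ → ℝ} :
    FFFeasible n p y z ↔ z 0 = 1 ∧ ∀ k < n,
      0 ≤ y (k + 1) ∧ y (k + 1) ≤ p (k + 1) * z k ∧ y (k + 1) + z (k + 1) = z k :=
  and_congr_right fun _ => forall_Icc_one_iff_succ

section QToFF

variable {n : ℕ} {p pol : ℕ → ℝ}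

lemma passProb_nonneg (hp : ∀ k < n, 0 ≤ p (k + 1) ∧ p (k + 1) ≤ 1)
    (hpol : ∀ k < n, 0 ≤ pol (k + 1) ∧ pol (k + 1) ≤ 1) : ∀ k ≤ n, 0 ≤ passProb p pol k
  | 0, _ => by simp
  | k + 1, hk => by
    obtain ⟨hp0, hp1⟩ := hp k hk
    obtain ⟨hpol0, hpol1⟩ := hpol k hk
    rw [passProb_succ]
    exact mul_nonneg (passProb_nonneg hp hpol k (by omega)) (by nlinarith)

lemma ffFeasible_passProb_of_qFeasible {y : ℕ → ℝ}
    (hp : ∀ k < n, 0 ≤ p (k + 1) ∧ p (k + 1) ≤ 1) (hpol : UnitBox n pol)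
    (hQ : QFeasible n p y pol) : FFFeasible n p y (passProb p pol) := by
  rw [unitBox_iff_succ] at hpol
  rw [qFeasible_iff_succ] at hQ
  refine ffFeasible_iff_succ.2 ⟨passProb_zero p pol, fun k hk => ?_⟩
  obtain ⟨hp0, hp1⟩ := hp k hk
  obtain ⟨hpol0, hpol1⟩ := hpol k hk
  have hpass := passProb_nonneg hp hpol k hk.le
  rw [hQ k hk, passProb_succ]
  refine ⟨mul_nonneg hpass (mul_nonneg hp0 (sub_nonneg.2 hpol1)), ?_, by ring⟩
  nlinarith [mul_nonneg (mul_nonneg hpass hp0) hpol0]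

end QToFF

section FFToQ

variable {n : ℕ} {p y z : ℕ → ℝ}

lemma FFFeasible.flow_pos (hp : ∀ k < n, p (k + 1) < 1) (hFF : FFFeasible n p y z) :
    ∀ k ≤ n, 0 < z k
  | 0, _ => by simp [hFF.1]
  | k + 1, hk => by
    obtain ⟨-, hy, hflow⟩ := (ffFeasible_iff_succ.1 hFF).2 k hk
    have := hFF.flow_pos hp k (by omega)
    nlinarith [hp k hk]

noncomputable def ffPolicy (p y z : ℕ → ℝ) (i : ℕ) : ℝ :=
  1 - y i / (p i * z (i - 1))

lemma mul_one_sub_ffPolicy_succ {k : ℕ} (hp : p (k + 1) ≠ 0) :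
    p (k + 1) * (1 - ffPolicy p y z (k + 1)) = y (k + 1) / z k := by
  rw [ffPolicy, Nat.add_sub_cancel, sub_sub_cancel, ← mul_div_assoc, mul_div_mul_left _ _ hp]

lemma unitBox_ffPolicy (hp : ∀ k < n, 0 < p (k + 1)) (hFF : FFFeasible n p y z)
    (hz : ∀ k ≤ n, 0 < z k) : UnitBox n (ffPolicy p y z) := by
  refine unitBox_iff_succ.2 fun k hk => ?_
  obtain ⟨hy0, hy, -⟩ := (ffFeasible_iff_succ.1 hFF).2 k hk
  have hden : 0 < p (k + 1) * z k := mul_pos (hp k hk) (hz k hk.le)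
  rw [ffPolicy, Nat.add_sub_cancel, sub_nonneg, div_le_one hden, sub_le_self_iff]
  exact ⟨hy, div_nonneg hy0 hden.le⟩

lemma passProb_ffPolicy (hp : ∀ k < n, 0 < p (k + 1)) (hFF : FFFeasible n p y z)
    (hz : ∀ k ≤ n, 0 < z k) : ∀ k ≤ n, passProb p (ffPolicy p y z) k = z k
  | 0, _ => by simp [hFF.1]
  | k + 1, hk => by
    obtain ⟨-, -, hflow⟩ := (ffFeasible_iff_succ.1 hFF).2 k hk
    have hzk := (hz k (by omega)).ne'
    rw [passProb_succ, passProb_ffPolicy hp hFF hz k (by omega),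
      show (1 - p (k + 1)) + p (k + 1) * ffPolicy p y z (k + 1)
        = 1 - p (k + 1) * (1 - ffPolicy p y z (k + 1)) by ring,
      mul_one_sub_ffPolicy_succ (hp k hk).ne']
    field_simp
    linarith

lemma qFeasible_ffPolicy (hp : ∀ k < n, 0 < p (k + 1)) (hFF : FFFeasible n p y z)
    (hz : ∀ k ≤ n, 0 < z k) : QFeasible n p y (ffPolicy p y z) := by
  refine qFeasible_iff_succ.2 fun k hk => ?_
  rw [passProb_ffPolicy hp hFF hz k hk.le, mul_one_sub_ffPolicy_succ (hp k hk).ne',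
    mul_div_cancel₀ _ (hz k hk.le).ne']

end FFToQ

theorem Q_FF_same_objective_values_general (n : ℕ) (p R : ℕ → ℝ)
    (hp : ∀ i, 1 ≤ i → i ≤ n → 0 < p i ∧ p i < 1) :
    {v : ℝ | ∃ y pol : ℕ → ℝ, UnitBox n pol ∧ QFeasible n p y pol ∧
        v = ∑ i ∈ Finset.Icc 1 n, R i * y i} =
    {v : ℝ | ∃ y z : ℕ → ℝ, FFFeasible n p y z ∧
        v = ∑ i ∈ Finset.Icc 1 n, R i * y i} := by
  have hp' : ∀ k < n, 0 < p (k + 1) ∧ p (k + 1) < 1 := fun k hk => hp (k + 1) (by omega) hk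
  ext v
  constructor
  · rintro ⟨y, pol, hpol, hQ, rfl⟩
    exact ⟨y, passProb p pol,
      ffFeasible_passProb_of_qFeasible (fun k hk => ⟨(hp' k hk).1.le, (hp' k hk).2.le⟩) hpol hQ,
      rfl⟩
  · rintro ⟨y, z, hFF, rfl⟩
    have hz := hFF.flow_pos fun k hk => (hp' k hk).2
    have hp0 : ∀ k < n, 0 < p (k + 1) := fun k hk => (hp' k hk).1
    exact ⟨y, ffPolicy p y z, unitBox_ffPolicy hp0 hFF hz, qFeasible_ffPolicy hp0 hFF hz, rfl⟩

/-- Problems Q and FF have the same attainable objective values. -/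
theorem Q_FF_same_objective_values (n : ℕ) (hn : 1 ≤ n) (p R : ℕ → ℝ)
    (hp : ∀ i, 1 ≤ i → i ≤ n → 0 < p i ∧ p i < 1) :
    {v : ℝ | ∃ y pol : ℕ → ℝ, UnitBox n pol ∧ QFeasible n p y pol ∧
        v = ∑ i ∈ Finset.Icc 1 n, R i * y i} =
    {v : ℝ | ∃ y z : ℕ → ℝ, FFFeasible n p y z ∧
        v = ∑ i ∈ Finset.Icc 1 n, R i * y i} :=
  Q_FF_same_objective_values_general n p R hp
end

section
/- (Weak duality between FF and P.) If (y, z) is FF-feasible and w = (w_0,…,w_n) is P-feasible, then ∑_{i=1}^n R_i y_i ≤ w_0. -/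
/-!
The potential `∑_{j ≤ i} R_j y_j + w_i z_i` is non-increasing in `i`: at stage `i` the mass
`z_{i-1}` splits into `y_i`, collected at reward `R_i`, and `z_i`, valued at `w_i`. Since
`y_i ≤ p_i z_{i-1}`, this is worth at most `max(w_i, q_i w_i + p_i R_i) · z_{i-1} ≤ w_{i-1} z_{i-1}`.
The potential starts at `w_0 z_0 = w_0` and ends at `∑ R_i y_i` because `w_n = 0`.
-/

theorem Finset.sum_Icc_pred_sub {M : Type*} [AddCommGroup M] (g : ℕ → M) (n : ℕ) :
    ∑ i ∈ Finset.Icc 1 n, (g (i - 1) - g i) = g 0 - g n := by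
  induction n with
  | zero => simp
  | succ n ih => rw [Finset.sum_Icc_succ_top (by omega), ih]; simp

theorem reward_add_value_le {p r w w' y z z' : ℝ} (hz : 0 ≤ z) (hy : 0 ≤ y) (hyp : y ≤ p * z)
    (hflow : y + z' = z) (hwr : (1 - p) * w' + p * r ≤ w) (hww : w' ≤ w) :
    r * y + w' * z' ≤ w * z := by
  have hsplit : r * y + w' * z' = w' * z + (r - w') * y := by rw [← hflow]; ring
  rw [hsplit]
  rcases le_or_gt r w' with hle | hgt
  · nlinarith
  · calc w' * z + (r - w') * y ≤ w' * z + (r - w') * (p * z) := by gcongr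
      _ = ((1 - p) * w' + p * r) * z := by ring
      _ ≤ w * z := by gcongr

namespace FFFeasible

variable {n : ℕ} {p y z : ℕ → ℝ}

theorem nonneg_prev (h : FFFeasible n p y z) {i : ℕ} (hi : 1 ≤ i) (hin : i ≤ n) (hpi : 0 < p i) :
    0 ≤ z (i - 1) :=
  have ⟨hy, hyp, _⟩ := h.2 i hi hin
  nonneg_of_mul_nonneg_right (hy.trans hyp) hpi

theorem reward_le_sub {R w : ℕ → ℝ} (h : FFFeasible n p y z) (hw : PFeasible n p R w)
    {i : ℕ} (hi : 1 ≤ i) (hin : i ≤ n) (hpi : 0 < p i) :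
    R i * y i ≤ w (i - 1) * z (i - 1) - w i * z i := by
  obtain ⟨hy, hyp, hflow⟩ := h.2 i hi hin
  obtain ⟨hwr, hww⟩ := hw.2 i hi hin
  linarith [reward_add_value_le (h.nonneg_prev hi hin hpi) hy hyp hflow hwr hww]

end FFFeasible

theorem weak_duality_FF_P_general (n : ℕ) (p R : ℕ → ℝ)
    (hp : ∀ i, 1 ≤ i → i ≤ n → 0 < p i ∧ p i < 1)
    (y z w : ℕ → ℝ) (hFF : FFFeasible n p y z) (hw : PFeasible n p R w) :
    ∑ i ∈ Finset.Icc 1 n, R i * y i ≤ w 0 := by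
  calc ∑ i ∈ Finset.Icc 1 n, R i * y i
      ≤ ∑ i ∈ Finset.Icc 1 n, (w (i - 1) * z (i - 1) - w i * z i) :=
        Finset.sum_le_sum fun i hi ↦
          have ⟨hi1, hin⟩ := Finset.mem_Icc.mp hi
          hFF.reward_le_sub hw hi1 hin (hp i hi1 hin).1
    _ = w 0 * z 0 - w n * z n := Finset.sum_Icc_pred_sub (fun i ↦ w i * z i) n
    _ = w 0 := by rw [hFF.1, hw.1]; ring

/-- Weak duality between FF and P. -/
theorem weak_duality_FF_P (n : ℕ) (hn : 1 ≤ n) (p R : ℕ → ℝ)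
    (hp : ∀ i, 1 ≤ i → i ≤ n → 0 < p i ∧ p i < 1)
    (y z w : ℕ → ℝ) (hFF : FFFeasible n p y z) (hw : PFeasible n p R w) :
    ∑ i ∈ Finset.Icc 1 n, R i * y i ≤ w 0 :=
  weak_duality_FF_P_general n p R hp y z w hFF hw
end

section
/- (Strong duality between FF and the DP equation.) Let w* be the DP solution. Then there exists an FF-feasible pair (y, z) with ∑_{i=1}^n R_i y_i = w*_0, and for every FF-feasible pair (y, z) one has ∑_{i=1}^n R_i y_i ≤ w*_0; i.e., the maximum of ∑_{i=1}^n R_i y_i over FF-feasible pairs equals w*_0. -/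
/-!
Along a feasible flow the potential `∑_{j ≤ i} R_j y_j + w*_i z_i` never increases: with
`z_i = z_{i-1} - y_i`, the new terms `R_i y_i + w*_i z_i` are affine in `y_i ∈ [0, p_i z_{i-1}]`,
and at both endpoints the Bellman equation bounds them by `w*_{i-1} z_{i-1}`. The potential starts
at `w*_0` and ends at the objective. Stopping at rate `p_i` exactly at the stages where
`w*_i ≤ R_i` turns every step into an equality.
-/

/-- `ws` satisfies the dynamic programming equation. -/
def DPSolution (n : ℕ) (p R ws : ℕ → ℝ) : Prop :=
  ws n = 0 ∧ ∀ i, 1 ≤ i → i ≤ n →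
    ws (i - 1) = max ((1 - p i) * ws i + p i * R i) (ws i)

open Finset

theorem sum_Icc_one_sub_pred {G : Type*} [AddCommGroup G] (f : ℕ → G) (n : ℕ) :
    ∑ i ∈ Icc 1 n, (f (i - 1) - f i) = f 0 - f n := by
  induction n with
  | zero => simp
  | succ k ih => rw [sum_Icc_succ_top (by omega), ih, Nat.add_sub_cancel, sub_add_sub_cancel]

section BellmanStep

variable {p R w w' z y : ℝ}

theorem bellman_step_le (hw : w' = max ((1 - p) * w + p * R) w) (hz : 0 ≤ z) (hy : 0 ≤ y)
    (hyp : y ≤ p * z) : R * y + w * (z - y) ≤ w' * z := by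
  have hstop : (1 - p) * w + p * R ≤ w' := hw ▸ le_max_left _ _
  have hcont : w ≤ w' := hw ▸ le_max_right _ _
  rcases le_total R w with hRw | hwR
  · nlinarith [mul_le_mul_of_nonneg_right hcont hz, mul_nonneg (sub_nonneg.mpr hRw) hy]
  · nlinarith [mul_le_mul_of_nonneg_right hstop hz,
      mul_le_mul_of_nonneg_left hyp (sub_nonneg.mpr hwR)]

theorem bellman_step_eq (hw : w' = max ((1 - p) * w + p * R) w) (hp : 0 ≤ p) :
    R * ((if w ≤ R then p else 0) * z) + w * (z - (if w ≤ R then p else 0) * z) = w' * z := by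
  by_cases hwR : w ≤ R
  · rw [hw, max_eq_left (by nlinarith), if_pos hwR]
    ring
  · rw [hw, max_eq_right (by nlinarith), if_neg hwR]
    ring

end BellmanStep

theorem FFFeasible.nonneg {n : ℕ} {p y z : ℕ → ℝ} (hp : ∀ i, 1 ≤ i → i ≤ n → p i ≤ 1)
    (h : FFFeasible n p y z) {m : ℕ} (hm : m ≤ n) : 0 ≤ z m := by
  induction m with
  | zero => rw [h.1]; exact zero_le_one
  | succ k ih =>
    obtain ⟨-, hyp, hflow⟩ := h.2 (k + 1) (by omega) hm
    rw [Nat.add_sub_cancel] at hyp hflow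
    nlinarith [ih (by omega), hp (k + 1) (by omega) hm]

noncomputable def greedyRate (p R ws : ℕ → ℝ) (i : ℕ) : ℝ := if ws i ≤ R i then p i else 0

noncomputable def greedyFlow (p R ws : ℕ → ℝ) (m : ℕ) : ℝ :=
  ∏ i ∈ Icc 1 m, (1 - greedyRate p R ws i)

theorem greedyFlow_zero (p R ws : ℕ → ℝ) : greedyFlow p R ws 0 = 1 := by simp [greedyFlow]

theorem greedyFlow_of_pos (p R ws : ℕ → ℝ) {i : ℕ} (hi : 1 ≤ i) :
    greedyFlow p R ws i = greedyFlow p R ws (i - 1) * (1 - greedyRate p R ws i) := by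
  obtain ⟨k, rfl⟩ := Nat.exists_eq_add_of_le' hi
  simp only [greedyFlow, Nat.add_sub_cancel]
  exact prod_Icc_succ_top (by omega) _

theorem greedyFlow_feasible {n : ℕ} {p : ℕ → ℝ} (R ws : ℕ → ℝ)
    (hp : ∀ i, 1 ≤ i → i ≤ n → 0 ≤ p i ∧ p i ≤ 1) :
    FFFeasible n p (fun i => greedyRate p R ws i * greedyFlow p R ws (i - 1))
      (greedyFlow p R ws) := by
  have hrate : ∀ i, 1 ≤ i → i ≤ n → 0 ≤ greedyRate p R ws i ∧ greedyRate p R ws i ≤ p i := by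
    intro i h1 hi
    unfold greedyRate
    split_ifs <;> simp [hp i h1 hi]
  have hnonneg : ∀ m ≤ n, 0 ≤ greedyFlow p R ws m := fun m hm =>
    prod_nonneg fun i hi => by
      obtain ⟨h1, hi⟩ := mem_Icc.mp hi
      linarith [(hrate i h1 (by omega)).2, (hp i h1 (by omega)).2]
  refine ⟨greedyFlow_zero p R ws, fun i h1 hi => ⟨?_, ?_, ?_⟩⟩
  · exact mul_nonneg (hrate i h1 hi).1 (hnonneg _ (by omega))
  · exact mul_le_mul_of_nonneg_right (hrate i h1 hi).2 (hnonneg _ (by omega))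
  · rw [greedyFlow_of_pos p R ws h1]; ring

theorem DPSolution.objective_le {n : ℕ} {p R ws y z : ℕ → ℝ}
    (hp : ∀ i, 1 ≤ i → i ≤ n → p i ≤ 1) (hws : DPSolution n p R ws) (hyz : FFFeasible n p y z) :
    ∑ i ∈ Icc 1 n, R i * y i ≤ ws 0 :=
  calc ∑ i ∈ Icc 1 n, R i * y i
      ≤ ∑ i ∈ Icc 1 n, (ws (i - 1) * z (i - 1) - ws i * z i) := sum_le_sum fun i hi => by
        obtain ⟨h1, hi⟩ := mem_Icc.mp hi
        obtain ⟨hy, hyp, hflow⟩ := hyz.2 i h1 hi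
        have hstep := bellman_step_le (hws.2 i h1 hi) (hyz.nonneg hp (by omega)) hy hyp
        rw [← hflow] at hstep ⊢
        linarith
    _ = ws 0 := by rw [sum_Icc_one_sub_pred (fun i => ws i * z i), hws.1, hyz.1]; ring

theorem DPSolution.greedyFlow_objective {n : ℕ} {p R ws : ℕ → ℝ}
    (hp : ∀ i, 1 ≤ i → i ≤ n → 0 ≤ p i) (hws : DPSolution n p R ws) :
    ∑ i ∈ Icc 1 n, R i * (greedyRate p R ws i * greedyFlow p R ws (i - 1)) = ws 0 :=
  calc ∑ i ∈ Icc 1 n, R i * (greedyRate p R ws i * greedyFlow p R ws (i - 1))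
      = ∑ i ∈ Icc 1 n, (ws (i - 1) * greedyFlow p R ws (i - 1) - ws i * greedyFlow p R ws i) :=
        sum_congr rfl fun i hi => by
          obtain ⟨h1, hi⟩ := mem_Icc.mp hi
          rw [greedyFlow_of_pos p R ws h1, greedyRate,
            ← bellman_step_eq (hws.2 i h1 hi) (hp i h1 hi)]
          ring
    _ = ws 0 := by
        rw [sum_Icc_one_sub_pred (fun i => ws i * greedyFlow p R ws i), hws.1, greedyFlow_zero]
        ring

theorem strong_duality_FF_DP_general (n : ℕ) (p R : ℕ → ℝ)
    (hp : ∀ i, 1 ≤ i → i ≤ n → 0 < p i ∧ p i < 1)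
    (ws : ℕ → ℝ) (hws : DPSolution n p R ws) :
    (∃ y z : ℕ → ℝ, FFFeasible n p y z ∧
      ∑ i ∈ Finset.Icc 1 n, R i * y i = ws 0) ∧
    (∀ y z : ℕ → ℝ, FFFeasible n p y z →
      ∑ i ∈ Finset.Icc 1 n, R i * y i ≤ ws 0) :=
  ⟨⟨_, _, greedyFlow_feasible R ws fun i h1 hi => ⟨(hp i h1 hi).1.le, (hp i h1 hi).2.le⟩,
      hws.greedyFlow_objective fun i h1 hi => (hp i h1 hi).1.le⟩,
    fun _ _ => hws.objective_le fun i h1 hi => (hp i h1 hi).2.le⟩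

/-- Strong duality: the maximum of the FF objective equals the DP value w*_0. -/
theorem strong_duality_FF_DP (n : ℕ) (hn : 1 ≤ n) (p R : ℕ → ℝ)
    (hp : ∀ i, 1 ≤ i → i ≤ n → 0 < p i ∧ p i < 1)
    (ws : ℕ → ℝ) (hws : DPSolution n p R ws) :
    (∃ y z : ℕ → ℝ, FFFeasible n p y z ∧
      ∑ i ∈ Finset.Icc 1 n, R i * y i = ws 0) ∧
    (∀ y z : ℕ → ℝ, FFFeasible n p y z →
      ∑ i ∈ Finset.Icc 1 n, R i * y i ≤ ws 0) :=
  strong_duality_FF_DP_general n p R hp ws hws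
end
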